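/- arXiv:2401.09346 — 4 statements merged into one kernel-verified Lean document; each statement's English description precedes it below -/
import Mathlib

section
/- Let {a_i}_{i≥1} be a nonnegative sequence satisfying a_i ≤ (1 - c·η_i) a_{i-1} + C·η_i² for all i ≥ 1, where η_i = η·i^{-β} with β ∈ (1/2, 1), η > 0, c > 0, C > 0, and c·η_i < 1 for all i. Then there is a constant M (depending on c, C, η, β, a₀) such that a_n ≤ M·n^{-β} for all n ≥ 1. -/
open MeasureTheory ProbabilityTheory Real
open scoped ENNReal NNReal RealInnerProductSpace

/-- Density of the Student t-distribution with `m` degrees of freedom. -/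
noncomputable def studentTPDF (m : ℝ) (x : ℝ) : ℝ :=
  (Real.Gamma ((m + 1) / 2) / (Real.sqrt (m * Real.pi) * Real.Gamma (m / 2))) *
    (1 + x ^ 2 / m) ^ (-(m + 1) / 2)

/-- The Student t-distribution with `m` degrees of freedom as a measure on `ℝ`. -/
noncomputable def studentTMeasure (m : ℝ) : Measure ℝ :=
  volume.withDensity fun x => ENNReal.ofReal (studentTPDF m x)

/-!
`B n = M * n ^ (-β)` is a supersolution of the recursion for large `n`: Bernoulli's inequality
gives `(n - 1) ^ (-β) ≤ (1 + 2β/n) n ^ (-β)`, so one step maps `B (n - 1)` to at most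
`B n - M n ^ (-β) (c η n ^ (-β) - 2β/n) + C η² n ^ (-2β)`. Since `β < 1`, eventually
`2β/n ≤ c η n ^ (-β) / 2`, and then `M ≥ 2Cη/c` makes this at most `B n`. Enlarging `M` to cover
the finitely many initial terms, the comparison principle propagates `a n ≤ B n`.
-/

open Filter

theorem le_of_le_of_supersolution {a B p q : ℕ → ℝ} {N : ℕ}
    (hp : ∀ n, N < n → 0 ≤ p n) (ha : ∀ n, N < n → a n ≤ p n * a (n - 1) + q n)
    (hB : ∀ n, N < n → p n * B (n - 1) + q n ≤ B n) (hN : a N ≤ B N) :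
    ∀ n, N ≤ n → a n ≤ B n := by
  intro n hn
  induction n, hn using Nat.le_induction with
  | base => exact hN
  | succ n hn ih =>
    calc a (n + 1) ≤ p (n + 1) * a n + q (n + 1) := by simpa using ha (n + 1) (by omega)
      _ ≤ p (n + 1) * B n + q (n + 1) := by gcongr; exact hp _ (by omega)
      _ ≤ B (n + 1) := by simpa using hB (n + 1) (by omega)

theorem rpow_neg_sub_one_le {β x : ℝ} (hβ0 : 0 ≤ β) (hβ1 : β ≤ 1) (hx : 2 ≤ x) :
    (x - 1) ^ (-β) ≤ (1 + 2 * β / x) * x ^ (-β) := by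
  have hx1 : 0 < x - 1 := by linarith
  have hratio : (x - 1) ^ (-β) = (1 + 1 / (x - 1)) ^ β * x ^ (-β) := by
    rw [show 1 + 1 / (x - 1) = x / (x - 1) by field_simp; ring,
      div_rpow (by linarith) hx1.le, rpow_neg hx1.le, rpow_neg (by linarith)]
    field_simp
  have hbernoulli : (1 + 1 / (x - 1)) ^ β ≤ 1 + β * (1 / (x - 1)) :=
    rpow_one_add_le_one_add_mul_self (by linarith [one_div_pos.mpr hx1]) hβ0 hβ1
  have hhalf : β * (1 / (x - 1)) ≤ 2 * β / x := by
    rw [mul_one_div, div_le_div_iff₀ hx1 (by linarith)]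
    nlinarith
  rw [hratio]
  gcongr
  linarith

theorem eventually_div_le_mul_rpow_neg {β : ℝ} (hβ : β < 1) (K : ℝ) {L : ℝ} (hL : 0 < L) :
    ∀ᶠ n : ℕ in atTop, K / n ≤ L * (n : ℝ) ^ (-β) := by
  have hlim : Tendsto (fun x : ℝ => K * x ^ (-(1 - β))) atTop (nhds 0) := by
    have := (tendsto_rpow_neg_atTop (y := 1 - β) (by linarith)).const_mul K
    rwa [mul_zero] at this
  have hev : ∀ᶠ x : ℝ in atTop, K / x ≤ L * x ^ (-β) := by
    filter_upwards [hlim.eventually (gt_mem_nhds hL), eventually_gt_atTop 0] with x hx hx0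
    have hsplit : K / x = K * x ^ (-(1 - β)) * x ^ (-β) := by
      rw [mul_assoc, ← rpow_add hx0, show -(1 - β) + -β = -1 by ring, rpow_neg_one, div_eq_mul_inv]
    rw [hsplit]
    gcongr
  exact tendsto_natCast_atTop_atTop.eventually hev

theorem supersolution_step {β η c C M x : ℝ} (hβ0 : 0 ≤ β) (hβ1 : β ≤ 1) (hx : 2 ≤ x)
    (hη : 0 ≤ η) (hc : 0 ≤ c) (hM : 0 ≤ M) (hCM : 2 * C * η ≤ M * c)
    (hstep : c * (η * x ^ (-β)) ≤ 1) (hsmall : 4 * β / x ≤ c * η * x ^ (-β)) :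
    (1 - c * (η * x ^ (-β))) * (M * (x - 1) ^ (-β)) + C * (η * x ^ (-β)) ^ 2
      ≤ M * x ^ (-β) := by
  set y := x ^ (-β)
  set t := 2 * β / x
  have hy : 0 ≤ y := rpow_nonneg (by linarith) _
  have ht : 0 ≤ t := by positivity
  have hz : (x - 1) ^ (-β) ≤ (1 + t) * y := rpow_neg_sub_one_le hβ0 hβ1 hx
  have hdrift : M * y * (2 * t) ≤ M * y * (c * η * y) :=
    mul_le_mul_of_nonneg_left (by linarith [show 4 * β / x = 2 * t by ring]) (by positivity)
  have hnoise : 2 * C * η * (η * y ^ 2) ≤ M * c * (η * y ^ 2) := by gcongr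
  have hcross : 0 ≤ c * η * y * t * M * y := by positivity
  calc (1 - c * (η * y)) * (M * (x - 1) ^ (-β)) + C * (η * y) ^ 2
      ≤ (1 - c * (η * y)) * (M * ((1 + t) * y)) + C * (η * y) ^ 2 := by
        gcongr
    _ ≤ M * y := by linarith

theorem stmt4_general (β η c C : ℝ) (hβ : β ∈ Set.Ioo (1/2 : ℝ) 1) (hη : 0 < η)
    (hc : 0 < c) (hC : 0 < C)
    (a : ℕ → ℝ)
    (hstep : ∀ i : ℕ, 1 ≤ i → c * (η * (i : ℝ) ^ (-β)) < 1)
    (hrec : ∀ i : ℕ, 1 ≤ i →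
      a i ≤ (1 - c * (η * (i : ℝ) ^ (-β))) * a (i - 1) + C * (η * (i : ℝ) ^ (-β)) ^ 2) :
    ∃ M : ℝ, ∀ n : ℕ, 1 ≤ n → a n ≤ M * (n : ℝ) ^ (-β) := by
  obtain ⟨hβ0, hβ1⟩ := hβ
  obtain ⟨N, hN⟩ := ((eventually_ge_atTop 2).and
    (eventually_div_le_mul_rpow_neg hβ1 (4 * β) (mul_pos hc hη))).exists_forall_of_atTop
  have hN2 : 2 ≤ N := (hN N le_rfl).1
  set M := max (2 * C * η / c)
    ((Finset.Icc 1 N).sup' ⟨1, by simp; omega⟩ fun n => a n * (n : ℝ) ^ β)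
  have hbase : ∀ n, 1 ≤ n → n ≤ N → a n ≤ M * (n : ℝ) ^ (-β) := by
    intro n hn hnN
    have hn0 : (0 : ℝ) < n := by exact_mod_cast hn
    rw [rpow_neg hn0.le, ← div_eq_mul_inv, le_div_iff₀ (by positivity)]
    exact le_max_of_le_right (Finset.le_sup' (fun n => a n * (n : ℝ) ^ β) (by simp; omega))
  refine ⟨M, fun n hn => ?_⟩
  rcases le_total n N with hnN | hNn
  · exact hbase n hn hnN
  refine le_of_le_of_supersolution (p := fun n => 1 - c * (η * (n : ℝ) ^ (-β)))
    (q := fun n => C * (η * (n : ℝ) ^ (-β)) ^ 2) (B := fun n => M * (n : ℝ) ^ (-β))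
    (fun n hn => by linarith [hstep n (by omega)]) (fun n hn => hrec n (by omega))
    (fun n hn => ?_) (hbase N (by omega) le_rfl) n hNn
  have hn1 : 1 ≤ n := by omega
  rw [Nat.cast_pred hn1]
  exact supersolution_step (by linarith) hβ1.le (by exact_mod_cast (hN n hn.le).1) hη.le hc.le
    (le_max_of_le_left (by positivity)) ((div_le_iff₀ hc).1 (le_max_left _ _))
    (hstep n hn1).le (hN n hn.le).2

theorem stmt4 (β η c C : ℝ) (hβ : β ∈ Set.Ioo (1/2 : ℝ) 1) (hη : 0 < η)
    (hc : 0 < c) (hC : 0 < C)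
    (a : ℕ → ℝ) (ha : ∀ i, 0 ≤ a i)
    (hstep : ∀ i : ℕ, 1 ≤ i → c * (η * (i : ℝ) ^ (-β)) < 1)
    (hrec : ∀ i : ℕ, 1 ≤ i →
      a i ≤ (1 - c * (η * (i : ℝ) ^ (-β))) * a (i - 1) + C * (η * (i : ℝ) ^ (-β)) ^ 2) :
    ∃ M : ℝ, ∀ n : ℕ, 1 ≤ n → a n ≤ M * (n : ℝ) ^ (-β) :=
  stmt4_general β η c C hβ hη hc hC a hstep hrec
end

section
/- For β ∈ (1/2, 1), η > 0, κ > 0, and η_l = η·l^{-β}, define D_k = η_k · ∑_{i=k}^{n} ∏_{l=k+1}^{i} (1 - η_l κ) for 1 ≤ k ≤ n (with the empty product equal to 1), assuming η_l κ < 1 for all l. Then there exists a constant C (independent of n) with ∑_{k=1}^{n} D_k² ≤ C·n. -/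
open MeasureTheory ProbabilityTheory Real
open scoped ENNReal NNReal RealInnerProductSpace

open Finset Filter

/-!
Write `S k = ∑_{i=k}^n ∏_{l=k+1}^i (1 - η_l κ)`, so that `D_k = η_k S k`. These sums satisfy the
backward recursion `S n = 1`, `S k = 1 + (1 - η_{k+1} κ) S (k+1)`, and since the factors lie in
`[0, 1]`, every sequence `b` with `b n ≥ 1` and `1 + (1 - η_{k+1} κ) b (k+1) ≤ b k` dominates `S`.
With `A = 2 / (η κ)` and `K` such that `A k^(β-1) ≤ 1` for `k ≥ K`, the sequence
`b k = A k^β + A K^β / (η κ)` is such a supersolution: one step of the recursion removes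
`η κ A = 2` while the growth `A ((k+1)^β - k^β) ≤ A k^(β-1)` is at most `1` once `k ≥ K`, and for
`k < K` the constant term pays for the growth. Hence `D_k ≤ η k^(-β) b k` is bounded uniformly in `k` and `n`.
-/

noncomputable def discountedSum (a : ℕ → ℝ) (n k : ℕ) : ℝ :=
  ∑ i ∈ Icc k n, ∏ l ∈ Icc (k + 1) i, (1 - a l)

section discountedSum
variable {a : ℕ → ℝ} {n : ℕ}

lemma discountedSum_self : discountedSum a n n = 1 := by
  simp [discountedSum]

lemma discountedSum_eq_one_add_mul {k : ℕ} (hkn : k < n) :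
    discountedSum a n k = 1 + (1 - a (k + 1)) * discountedSum a n (k + 1) := by
  rw [discountedSum, Icc_eq_cons_Ioc hkn.le, sum_cons, ← Icc_add_one_left_eq_Ioc,
    discountedSum, mul_sum]
  simp only [Icc_eq_empty_of_lt (Nat.lt_succ_self k), prod_empty]
  congr 1
  refine sum_congr rfl fun i hi => ?_
  rw [Icc_eq_cons_Ioc (mem_Icc.1 hi).1, prod_cons, ← Icc_add_one_left_eq_Ioc]

lemma discountedSum_nonneg (ha : ∀ l, 1 ≤ l → a l ≤ 1) (k : ℕ) : 0 ≤ discountedSum a n k :=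
  sum_nonneg fun _ _ => prod_nonneg fun l hl =>
    sub_nonneg.2 (ha l (by have := (mem_Icc.1 hl).1; omega))

lemma discountedSum_le_of_one_add_mul_le {b : ℕ → ℝ} {m : ℕ} (ha : ∀ l, 1 ≤ l → a l ≤ 1)
    (hbn : 1 ≤ b n)
    (hb : ∀ k, m ≤ k → k < n → 1 + (1 - a (k + 1)) * b (k + 1) ≤ b k) :
    ∀ k, m ≤ k → k ≤ n → discountedSum a n k ≤ b k := by
  intro k hmk hkn
  induction hkn using Nat.decreasingInduction with
  | self => rwa [discountedSum_self]
  | of_succ k hkn ih =>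
    rw [discountedSum_eq_one_add_mul hkn]
    have := mul_le_mul_of_nonneg_left (ih (by omega)) (sub_nonneg.2 (ha (k + 1) le_add_self))
    linarith [hb k hmk hkn]

end discountedSum

lemma add_one_rpow_le {x β : ℝ} (hx : 0 < x) (hβ0 : 0 ≤ β) (hβ1 : β ≤ 1) :
    (x + 1) ^ β ≤ x ^ β + x ^ (β - 1) := by
  have hbern := rpow_one_add_le_one_add_mul_self (s := x⁻¹) (by linarith [inv_pos.2 hx]) hβ0 hβ1
  calc (x + 1) ^ β = x ^ β * (1 + x⁻¹) ^ β := by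
        rw [← mul_rpow hx.le (by positivity), mul_add, mul_inv_cancel₀ hx.ne', mul_one]
    _ ≤ x ^ β * (1 + x⁻¹) := by
        gcongr
        exact hbern.trans (by nlinarith [inv_pos.2 hx])
    _ = x ^ β + x ^ (β - 1) := by rw [rpow_sub_one hx.ne']; field_simp

lemma exists_nat_forall_le_mul_rpow_le_one {β : ℝ} (hβ : β < 1) (A : ℝ) :
    ∃ K : ℕ, ∀ k : ℕ, K ≤ k → A * (k : ℝ) ^ (β - 1) ≤ 1 := by
  have hlim : Tendsto (fun k : ℕ => A * (k : ℝ) ^ (β - 1)) atTop (nhds 0) := by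
    have := ((tendsto_rpow_neg_atTop (sub_pos.2 hβ)).comp tendsto_natCast_atTop_atTop).const_mul A
    simpa using this
  exact eventually_atTop.1 ((hlim.eventually_lt_const one_pos).mono fun _ => le_of_lt)

section rpowStep
variable {β η κ : ℝ} (hβ0 : 0 ≤ β) (hβ1 : β ≤ 1) (hη : 0 < η) (hκ : 0 < κ)
  {K : ℕ} (hK : ∀ k : ℕ, K ≤ k → 2 / (η * κ) * (k : ℝ) ^ (β - 1) ≤ 1)
include hβ0 hβ1 hη hκ hK

lemma one_add_mul_rpow_majorant_le {k : ℕ} (hk : 1 ≤ k) :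
    1 + (1 - η * ((k + 1 : ℕ) : ℝ) ^ (-β) * κ) *
        (2 / (η * κ) * ((k + 1 : ℕ) : ℝ) ^ β + 2 / (η * κ) ^ 2 * (K : ℝ) ^ β) ≤
      2 / (η * κ) * (k : ℝ) ^ β + 2 / (η * κ) ^ 2 * (K : ℝ) ^ β := by
  set A := 2 / (η * κ) with hA
  have hk1 : (1 : ℝ) ≤ k := by exact_mod_cast hk
  have hy : 0 < ((k : ℝ) + 1) ^ β := by positivity
  have hgrowth : A * ((k : ℝ) + 1) ^ β ≤ A * (k : ℝ) ^ β + A * (k : ℝ) ^ (β - 1) := by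
    rw [← mul_add]; gcongr; exact add_one_rpow_le (by linarith) hβ0 hβ1
  have hkey : A * (k : ℝ) ^ (β - 1) ≤ 1 + A * (K : ℝ) ^ β / ((k : ℝ) + 1) ^ β := by
    rcases le_or_gt K k with hKk | hkK
    · have : 0 ≤ A * (K : ℝ) ^ β / ((k : ℝ) + 1) ^ β := by positivity
      linarith [hK k hKk]
    · have h1 : A * (k : ℝ) ^ (β - 1) ≤ A :=
        mul_le_of_le_one_right (by positivity) (rpow_le_one_of_one_le_of_nonpos hk1 (by linarith))
      have h2 : A ≤ A * (K : ℝ) ^ β / ((k : ℝ) + 1) ^ β := by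
        rw [le_div_iff₀ hy]; gcongr; exact_mod_cast hkK
      linarith
  have hexpand : (1 - η * (((k : ℝ) + 1) ^ β)⁻¹ * κ) *
        (A * ((k : ℝ) + 1) ^ β + 2 / (η * κ) ^ 2 * (K : ℝ) ^ β) =
      A * ((k : ℝ) + 1) ^ β + 2 / (η * κ) ^ 2 * (K : ℝ) ^ β - 2 -
        A * (K : ℝ) ^ β / ((k : ℝ) + 1) ^ β := by
    rw [hA]; field_simp; ring
  push_cast
  rw [rpow_neg (by positivity), hexpand]
  linarith

lemma discountedSum_le_rpow_majorant (hstep : ∀ l : ℕ, 1 ≤ l → η * (l : ℝ) ^ (-β) * κ < 1)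
    {n k : ℕ} (hk : 1 ≤ k) (hkn : k ≤ n) :
    discountedSum (fun l => η * (l : ℝ) ^ (-β) * κ) n k ≤
      2 / (η * κ) * (k : ℝ) ^ β + 2 / (η * κ) ^ 2 * (K : ℝ) ^ β := by
  have ha : ∀ l : ℕ, 1 ≤ l → η * (l : ℝ) ^ (-β) * κ ≤ 1 := fun l hl => (hstep l hl).le
  refine discountedSum_le_of_one_add_mul_le
    (b := fun j => 2 / (η * κ) * (j : ℝ) ^ β + 2 / (η * κ) ^ 2 * K ^ β) ha ?_
    (fun k hk _ => one_add_mul_rpow_majorant_le hβ0 hβ1 hη hκ hK hk) k hk hkn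
  have hηκ : η * κ ≤ 1 := by simpa using ha 1 le_rfl
  have hn : (1 : ℝ) ≤ (n : ℝ) ^ β := one_le_rpow (by exact_mod_cast hk.trans hkn) hβ0
  have hA : 2 ≤ 2 / (η * κ) := by rw [le_div_iff₀ (by positivity)]; linarith
  have : 0 ≤ 2 / (η * κ) ^ 2 * (K : ℝ) ^ β := by positivity
  nlinarith

lemma rpow_step_mul_discountedSum_le (hstep : ∀ l : ℕ, 1 ≤ l → η * (l : ℝ) ^ (-β) * κ < 1)
    {n k : ℕ} (hk : 1 ≤ k) (hkn : k ≤ n) :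
    η * (k : ℝ) ^ (-β) * discountedSum (fun l => η * (l : ℝ) ^ (-β) * κ) n k ≤
      η * (2 / (η * κ) + 2 / (η * κ) ^ 2 * (K : ℝ) ^ β) := by
  have hk0 : (0 : ℝ) < k := by exact_mod_cast hk
  have hkβ : (k : ℝ) ^ (-β) ≤ 1 :=
    rpow_le_one_of_one_le_of_nonpos (by exact_mod_cast hk) (by linarith)
  calc η * (k : ℝ) ^ (-β) * discountedSum (fun l => η * (l : ℝ) ^ (-β) * κ) n k
      ≤ η * (k : ℝ) ^ (-β) * (2 / (η * κ) * (k : ℝ) ^ β + 2 / (η * κ) ^ 2 * (K : ℝ) ^ β) := by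
        gcongr; exact discountedSum_le_rpow_majorant hβ0 hβ1 hη hκ hK hstep hk hkn
    _ = η * (2 / (η * κ) + 2 / (η * κ) ^ 2 * (K : ℝ) ^ β * (k : ℝ) ^ (-β)) := by
        rw [rpow_neg hk0.le]; field_simp
    _ ≤ η * (2 / (η * κ) + 2 / (η * κ) ^ 2 * (K : ℝ) ^ β) := by
        gcongr η * (_ + ?_); exact mul_le_of_le_one_right (by positivity) hkβ

end rpowStep

theorem stmt5 (β η κ : ℝ) (hβ : β ∈ Set.Ioo (1/2 : ℝ) 1) (hη : 0 < η) (hκ : 0 < κ)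
    (hstep : ∀ l : ℕ, 1 ≤ l → η * (l : ℝ) ^ (-β) * κ < 1) :
    ∃ C : ℝ, ∀ n : ℕ, 1 ≤ n →
      ∑ k ∈ Finset.Icc 1 n,
        ((η * (k : ℝ) ^ (-β)) *
          ∑ i ∈ Finset.Icc k n, ∏ l ∈ Finset.Icc (k + 1) i, (1 - η * (l : ℝ) ^ (-β) * κ)) ^ 2
        ≤ C * n := by
  have hβ0 : 0 ≤ β := by linarith [hβ.1]
  obtain ⟨K, hK⟩ := exists_nat_forall_le_mul_rpow_le_one hβ.2 (2 / (η * κ))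
  set M := η * (2 / (η * κ) + 2 / (η * κ) ^ 2 * (K : ℝ) ^ β)
  refine ⟨M ^ 2, fun n _ => ?_⟩
  have hweight : ∀ k ∈ Icc 1 n,
      0 ≤ η * (k : ℝ) ^ (-β) * discountedSum (fun l => η * (l : ℝ) ^ (-β) * κ) n k ∧
        η * (k : ℝ) ^ (-β) * discountedSum (fun l => η * (l : ℝ) ^ (-β) * κ) n k ≤ M :=
    fun k hk => ⟨mul_nonneg (by positivity) (discountedSum_nonneg (fun l hl => (hstep l hl).le) k),
      rpow_step_mul_discountedSum_le hβ0 hβ.2.le hη hκ hK hstep (mem_Icc.1 hk).1 (mem_Icc.1 hk).2⟩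
  calc _ ≤ ∑ _k ∈ Icc 1 n, M ^ 2 :=
        sum_le_sum fun k hk => pow_le_pow_left₀ (hweight k hk).1 (hweight k hk).2 2
    _ = M ^ 2 * n := by simp [mul_comm]
end

section
/- Fix β ∈ (1/2, 1), c > 0, and η_l = η·l^{-β} with η > 0 and c·η_l < 1 for all l. Then for 1 ≤ k ≤ n, the weights U_k := η_k ∑_{i=k}^{n} ∏_{l=k+1}^{i}(1 - c·η_l) satisfy sup_{1 ≤ k ≤ n} U_k ≤ C for a constant C independent of n and k. -/
open MeasureTheory ProbabilityTheory Real
open scoped ENNReal NNReal RealInnerProductSpace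

/-!
Write `a l = c η l^(-β)` and `F i = ∏_{l=k+1}^{i} √(1 - a l)`, so that the summand is `F i ^ 2`.
Since `β < 1`, eventually `a l ≥ 2β / l`, and as `2β ≥ 1` Bernoulli's inequality then gives
`√(1 - a l) ≤ (1 - 1/l)^β`; hence `k^(-β) F i ≤ C i^(-β)`, i.e. the decay of one factor `F i`
absorbs the growth of `(i/k)^β`. So each term `η k^(-β) F i ^ 2` is at most `C' a (i + 1) F i`,
and since `F (i + 1) ≤ F i (1 - a (i + 1) / 2)` the sum of the `a (i + 1) F i` telescopes to at
most `2 F k = 2`.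
-/

open Finset

theorem sum_mul_le_of_le_mul_one_sub {x b : ℕ → ℝ} {k n : ℕ} (hkn : k ≤ n)
    (hx : 0 ≤ x (n + 1)) (h : ∀ i ∈ Icc k n, x (i + 1) ≤ x i * (1 - b (i + 1))) :
    ∑ i ∈ Icc k n, b (i + 1) * x i ≤ x k := by
  have htel : ∑ i ∈ Icc k n, (x i - x (i + 1)) = x k - x (n + 1) := by
    rw [← Ico_add_one_right_eq_Icc, ← neg_sub, ← sum_Ico_sub x (by omega), ← sum_neg_distrib]
    simp only [neg_sub]
  calc ∑ i ∈ Icc k n, b (i + 1) * x i ≤ ∑ i ∈ Icc k n, (x i - x (i + 1)) :=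
        sum_le_sum fun i hi => by linarith [h i hi]
    _ ≤ x k := by linarith

theorem sum_mul_prod_sqrt_one_sub_le {a : ℕ → ℝ} {k n : ℕ} (hkn : k ≤ n)
    (ha : ∀ l, k < l → a l ≤ 1) :
    ∑ i ∈ Icc k n, a (i + 1) * ∏ l ∈ Icc (k + 1) i, √(1 - a l) ≤ 2 := by
  set F : ℕ → ℝ := fun i => ∏ l ∈ Icc (k + 1) i, √(1 - a l)
  have hF : ∀ i ∈ Icc k n, F (i + 1) ≤ F i * (1 - a (i + 1) / 2) := by
    intro i hi
    have hi : k ≤ i := (mem_Icc.1 hi).1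
    have hsqrt : √(1 - a (i + 1)) ≤ 1 - a (i + 1) / 2 := by
      simpa [sub_eq_add_neg, neg_div] using
        Real.sqrt_one_add_le (x := -a (i + 1)) (by linarith [ha (i + 1) (by omega)])
    calc F (i + 1) = F i * √(1 - a (i + 1)) := prod_Icc_succ_top (by omega) _
      _ ≤ F i * (1 - a (i + 1) / 2) :=
        mul_le_mul_of_nonneg_left hsqrt (prod_nonneg fun _ _ => Real.sqrt_nonneg _)
  have hFk : F k = 1 := by simp [F]
  have hhalf : ∑ i ∈ Icc k n, a (i + 1) / 2 * F i ≤ F k :=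
    sum_mul_le_of_le_mul_one_sub (b := fun i => a i / 2) hkn
      (prod_nonneg fun _ _ => Real.sqrt_nonneg _) hF
  calc ∑ i ∈ Icc k n, a (i + 1) * F i = 2 * ∑ i ∈ Icc k n, a (i + 1) / 2 * F i := by
        rw [mul_sum]; exact sum_congr rfl fun i _ => by ring
    _ ≤ 2 := by linarith

theorem mul_prod_le_pow_mul {w s : ℕ → ℝ} {G : ℝ} {k L : ℕ} (hG : 1 ≤ G)
    (hw : ∀ l, 0 ≤ w l) (hs : ∀ l, 0 ≤ s l)
    (hcrude : ∀ l, k ≤ l → w l * s (l + 1) ≤ G * w (l + 1))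
    (hfine : ∀ l, k ≤ l → L ≤ l → w l * s (l + 1) ≤ w (l + 1)) {i : ℕ} (hki : k ≤ i) :
    w k * ∏ l ∈ Icc (k + 1) i, s l ≤ G ^ L * w i := by
  suffices h : w k * ∏ l ∈ Icc (k + 1) i, s l ≤ G ^ min i L * w i from
    h.trans (mul_le_mul_of_nonneg_right (pow_le_pow_right₀ hG (min_le_right i L)) (hw i))
  induction i, hki using Nat.le_induction with
  | base =>
    rw [Icc_eq_empty (by omega), prod_empty, mul_one]
    exact le_mul_of_one_le_left (hw k) (one_le_pow₀ hG)
  | succ i hki ih =>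
    rw [prod_Icc_succ_top (by omega), ← mul_assoc]
    have hG0 : 0 ≤ G := zero_le_one.trans hG
    calc w k * (∏ l ∈ Icc (k + 1) i, s l) * s (i + 1) ≤ G ^ min i L * (w i * s (i + 1)) := by
          rw [← mul_assoc]; exact mul_le_mul_of_nonneg_right ih (hs _)
      _ ≤ G ^ min (i + 1) L * w (i + 1) := by
        rcases le_or_gt L i with hLi | hiL
        · rw [min_eq_right hLi, min_eq_right (by omega)]
          exact mul_le_mul_of_nonneg_left (hfine i hki hLi) (pow_nonneg hG0 _)
        · rw [min_eq_left hiL.le, min_eq_left (by omega), pow_succ, mul_assoc]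
          exact mul_le_mul_of_nonneg_left (hcrude i hki) (pow_nonneg hG0 _)

theorem rpow_neg_le_two_rpow_mul_rpow_neg_add_one {p x : ℝ} (hp : 0 ≤ p) (hx : 1 ≤ x) :
    x ^ (-p) ≤ 2 ^ p * (x + 1) ^ (-p) := by
  calc x ^ (-p) ≤ ((x + 1) / 2) ^ (-p) :=
        Real.rpow_le_rpow_of_nonpos (by positivity) (by linarith) (neg_nonpos.2 hp)
    _ = 2 ^ p * (x + 1) ^ (-p) := by
      rw [Real.div_rpow (by positivity) zero_le_two, Real.rpow_neg zero_le_two, div_inv_eq_mul,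
        mul_comm]

theorem rpow_neg_mul_sqrt_le_rpow_neg_add_one {p x a : ℝ} (hp : 1 / 2 ≤ p) (hx : 0 < x)
    (ha : 2 * p / (x + 1) ≤ a) : x ^ (-p) * √(1 - a) ≤ (x + 1) ^ (-p) := by
  have hbernoulli : 1 - 2 * p / (x + 1) ≤ (x / (x + 1)) ^ (2 * p) := by
    have h := one_add_mul_self_le_rpow_one_add (s := -(1 / (x + 1)))
      (by rw [neg_le_neg_iff, div_le_one (by positivity)]; linarith) (p := 2 * p) (by linarith)
    have hx1 : (1 : ℝ) + -(1 / (x + 1)) = x / (x + 1) := by field_simp; ring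
    rw [hx1] at h
    linarith [show 2 * p * -(1 / (x + 1)) = -(2 * p / (x + 1)) by ring]
  have hsqrt : √(1 - a) ≤ (x / (x + 1)) ^ p := by
    rw [Real.sqrt_le_left (by positivity), ← Real.rpow_natCast, ← Real.rpow_mul (by positivity)]
    push_cast
    rw [mul_comm]
    linarith
  calc x ^ (-p) * √(1 - a) ≤ x ^ (-p) * (x / (x + 1)) ^ p :=
        mul_le_mul_of_nonneg_left hsqrt (by positivity)
    _ = (x + 1) ^ (-p) := by
      rw [Real.div_rpow hx.le (by positivity), Real.rpow_neg hx.le, Real.rpow_neg (by positivity)]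
      field_simp

theorem exists_forall_ge_div_le_mul_rpow_neg {β κ : ℝ} (hβ : β < 1) (hκ : 0 < κ) (A : ℝ) :
    ∃ L : ℕ, ∀ l : ℕ, L ≤ l → A / l ≤ κ * (l : ℝ) ^ (-β) := by
  have hgrowth := (tendsto_rpow_atTop (sub_pos.2 hβ)).comp tendsto_natCast_atTop_atTop
  obtain ⟨L, hL⟩ := Filter.eventually_atTop.1
    ((hgrowth.eventually_ge_atTop (A / κ)).and (Filter.eventually_ge_atTop 1))
  refine ⟨L, fun l hl => ?_⟩
  obtain ⟨hAl, hl1⟩ := hL l hl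
  have hl0 : (0 : ℝ) < l := by exact_mod_cast hl1
  calc A / l = κ * (A / κ) / l := by field_simp
    _ ≤ κ * (l : ℝ) ^ (1 - β) / l := by gcongr; exact hAl
    _ = κ * (l : ℝ) ^ (-β) := by
      rw [mul_div_assoc, ← Real.rpow_sub_one hl0.ne']; ring_nf

theorem rpow_neg_mul_prod_sqrt_one_sub_le {β κ : ℝ} {L k i : ℕ} (hβ : 1 / 2 ≤ β) (hκ : 0 ≤ κ)
    (hL : ∀ l : ℕ, L ≤ l → 2 * β / l ≤ κ * (l : ℝ) ^ (-β)) (hk : 1 ≤ k) (hki : k ≤ i) :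
    (k : ℝ) ^ (-β) * ∏ l ∈ Icc (k + 1) i, √(1 - κ * (l : ℝ) ^ (-β)) ≤
      (2 ^ β) ^ L * (i : ℝ) ^ (-β) := by
  refine mul_prod_le_pow_mul (w := fun l : ℕ => (l : ℝ) ^ (-β))
    (Real.one_le_rpow one_le_two (by linarith)) (fun l => by positivity)
    (fun l => Real.sqrt_nonneg _) (fun l hkl => ?_) (fun l hkl hLl => ?_) hki
  · have hl : (1 : ℝ) ≤ l := by exact_mod_cast hk.trans hkl
    calc (l : ℝ) ^ (-β) * √(1 - κ * ((l + 1 : ℕ) : ℝ) ^ (-β)) ≤ (l : ℝ) ^ (-β) * 1 := by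
          gcongr; exact Real.sqrt_le_one.mpr (by simp only [sub_le_self_iff]; positivity)
      _ ≤ 2 ^ β * ((l + 1 : ℕ) : ℝ) ^ (-β) := by
          rw [mul_one]; push_cast; exact rpow_neg_le_two_rpow_mul_rpow_neg_add_one (by linarith) hl
  · have hl : (0 : ℝ) < l := by exact_mod_cast hk.trans hkl
    have hal := hL (l + 1) (by omega)
    push_cast at hal ⊢
    exact rpow_neg_mul_sqrt_le_rpow_neg_add_one hβ hl hal

theorem mul_sum_prod_one_sub_le {β κ : ℝ} {L k n : ℕ} (hβ : 1 / 2 ≤ β) (hκ : 0 < κ)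
    (hL : ∀ l : ℕ, L ≤ l → 2 * β / l ≤ κ * (l : ℝ) ^ (-β))
    (hκ₁ : ∀ l : ℕ, 1 ≤ l → κ * (l : ℝ) ^ (-β) < 1) (hk : 1 ≤ k) (hkn : k ≤ n) :
    κ * (k : ℝ) ^ (-β) * ∑ i ∈ Icc k n, ∏ l ∈ Icc (k + 1) i, (1 - κ * (l : ℝ) ^ (-β)) ≤
      2 * (2 ^ β) ^ (L + 1) := by
  set a : ℕ → ℝ := fun l => κ * (l : ℝ) ^ (-β)
  set F : ℕ → ℝ := fun i => ∏ l ∈ Icc (k + 1) i, √(1 - a l)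
  have hsq : ∀ i, ∏ l ∈ Icc (k + 1) i, (1 - a l) = F i ^ 2 := fun i => by
    rw [← prod_pow]
    exact prod_congr rfl fun l hl =>
      (Real.sq_sqrt (sub_nonneg.2 (hκ₁ l (by simp at hl; omega)).le)).symm
  have hterm : ∀ i ∈ Icc k n, κ * (k : ℝ) ^ (-β) * ∏ l ∈ Icc (k + 1) i, (1 - a l)
      ≤ (2 ^ β) ^ (L + 1) * (a (i + 1) * F i) := by
    intro i hi
    have hki := (mem_Icc.1 hi).1
    have hi : (1 : ℝ) ≤ i := by exact_mod_cast hk.trans hki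
    have hF : 0 ≤ F i := prod_nonneg fun _ _ => Real.sqrt_nonneg _
    calc κ * (k : ℝ) ^ (-β) * ∏ l ∈ Icc (k + 1) i, (1 - a l)
        = κ * ((k : ℝ) ^ (-β) * F i) * F i := by rw [hsq]; ring
      _ ≤ κ * ((2 ^ β) ^ L * (2 ^ β * ((i : ℝ) + 1) ^ (-β))) * F i := by
        refine mul_le_mul_of_nonneg_right (mul_le_mul_of_nonneg_left
          ((rpow_neg_mul_prod_sqrt_one_sub_le hβ hκ.le hL hk hki).trans ?_) hκ.le) hF
        gcongr
        exact rpow_neg_le_two_rpow_mul_rpow_neg_add_one (by linarith) hi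
      _ = (2 ^ β) ^ (L + 1) * (a (i + 1) * F i) := by
        simp only [a]; push_cast; ring
  calc κ * (k : ℝ) ^ (-β) * ∑ i ∈ Icc k n, ∏ l ∈ Icc (k + 1) i, (1 - a l)
      ≤ ∑ i ∈ Icc k n, (2 ^ β) ^ (L + 1) * (a (i + 1) * F i) := by
        rw [mul_sum]; exact sum_le_sum hterm
    _ ≤ (2 ^ β) ^ (L + 1) * 2 := by
        rw [← mul_sum]
        exact mul_le_mul_of_nonneg_left
          (sum_mul_prod_sqrt_one_sub_le hkn fun l hl => (hκ₁ l (by omega)).le) (by positivity)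
    _ = 2 * (2 ^ β) ^ (L + 1) := mul_comm _ _

theorem stmt12 (β η c : ℝ) (hβ : β ∈ Set.Ioo (1/2 : ℝ) 1) (hη : 0 < η) (hc : 0 < c)
    (hstep : ∀ l : ℕ, 1 ≤ l → c * (η * (l : ℝ) ^ (-β)) < 1) :
    ∃ C : ℝ, ∀ n k : ℕ, 1 ≤ k → k ≤ n →
      (η * (k : ℝ) ^ (-β)) *
        ∑ i ∈ Finset.Icc k n, ∏ l ∈ Finset.Icc (k + 1) i, (1 - c * (η * (l : ℝ) ^ (-β)))
      ≤ C := by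
  obtain ⟨hβ₁, hβ₂⟩ := hβ
  simp only [← mul_assoc c η] at hstep ⊢
  obtain ⟨L, hL⟩ := exists_forall_ge_div_le_mul_rpow_neg hβ₂ (mul_pos hc hη) (2 * β)
  refine ⟨2 * (2 ^ β) ^ (L + 1) / c, fun n k hk hkn => ?_⟩
  rw [le_div_iff₀ hc]
  calc _ = c * η * (k : ℝ) ^ (-β) *
        ∑ i ∈ Icc k n, ∏ l ∈ Icc (k + 1) i, (1 - c * η * (l : ℝ) ^ (-β)) := by ring
    _ ≤ 2 * (2 ^ β) ^ (L + 1) := mul_sum_prod_one_sub_le hβ₁.le (mul_pos hc hη) hL hstep hk hkn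
end

section
/- Let {a_i} satisfy a_i ≤ (1 - c·η_i) a_{i-1} + b·η_i·r_{i-1} with a₀ ≥ 0, where η_i = η·i^{-β}, β ∈ (1/2,1), c, b > 0, c·η_i < 1 for all i, and r_i ≤ M·i^{-β} for i ≥ 1 (and r₀ ≤ M). Then the Cesàro average ā_n = n^{-1}∑_{i=1}^n a_i satisfies ā_n ≤ C·max(a₀/n, n^{-β}) for a constant C independent of n and a₀. -/
/-!
Write the recursion as `a (i+1) ≤ (1 - γ i) a i + γ i ρ i` with `γ i = c η_{i+1}` and
`ρ i = (b / c) r i ≤ D i^(-β)`, `D = b M / c`. Each step is a convex combination, so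
`a i ≤ a 0 + D` throughout. Since `β < 1`, eventually `γ i ≥ 2 / (i + 1)`, say from `N` on, and
from then on the contraction preserves the profile `a i ≤ N² a 0 / i² + 2 D N^β i^(-β)`, which
holds up to `N` by the crude bound. Averaging with `∑ 1/i² ≤ 2` and
`∑_{i ≤ n} i^(-β) ≤ n^(1-β) / (1 - β)` gives the claim.
-/

open MeasureTheory ProbabilityTheory Real
open scoped ENNReal NNReal RealInnerProductSpace

open Finset Filter

lemma rpow_neg_mul_self {x : ℝ} (hx : 0 < x) (β : ℝ) : x ^ (-β) * x = x ^ (1 - β) := by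
  rw [← rpow_add_one hx.ne', neg_add_eq_sub]

/-- Bernoulli's inequality `(1 - 1/y) ^ (1 - β) ≤ 1 - (1 - β) / y`, scaled by `y ^ (1 - β)`. -/
lemma one_sub_mul_rpow_neg_le_rpow_sub_rpow {β x : ℝ} (hβ0 : 0 ≤ β) (hβ1 : β ≤ 1)
    (hx : 0 ≤ x) : (1 - β) * (x + 1) ^ (-β) ≤ (x + 1) ^ (1 - β) - x ^ (1 - β) := by
  have hy : 0 < x + 1 := by linarith
  have hinv : (x + 1)⁻¹ ≤ 1 := inv_le_one_of_one_le₀ (by linarith)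
  have hbern := rpow_one_add_le_one_add_mul_self (s := -(x + 1)⁻¹) (p := 1 - β)
    (by linarith) (by linarith) (by linarith)
  have hdiv : (x + 1) ^ (1 - β) * (x + 1)⁻¹ = (x + 1) ^ (-β) := by
    rw [← rpow_neg_mul_self hy, mul_inv_cancel_right₀ hy.ne']
  have key : x ^ (1 - β) ≤ (x + 1) ^ (1 - β) - (1 - β) * (x + 1) ^ (-β) :=
    calc x ^ (1 - β) = ((x + 1) * (1 + -(x + 1)⁻¹)) ^ (1 - β) := by
          congr 1; field_simp; ring
      _ = (x + 1) ^ (1 - β) * (1 + -(x + 1)⁻¹) ^ (1 - β) := mul_rpow hy.le (by linarith)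
      _ ≤ (x + 1) ^ (1 - β) * (1 + (1 - β) * -(x + 1)⁻¹) := by gcongr
      _ = (x + 1) ^ (1 - β) - (1 - β) * (x + 1) ^ (-β) := by rw [← hdiv]; ring
  linarith

lemma sum_Icc_rpow_neg_le {β : ℝ} (hβ0 : 0 ≤ β) (hβ1 : β < 1) (n : ℕ) :
    ∑ i ∈ Icc 1 n, (i : ℝ) ^ (-β) ≤ (n : ℝ) ^ (1 - β) / (1 - β) := by
  have h1β : 0 < 1 - β := by linarith
  induction n with
  | zero => simp [zero_rpow h1β.ne']
  | succ n ih =>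
    rw [sum_Icc_succ_top (by omega), le_div_iff₀ h1β, add_mul]
    rw [le_div_iff₀ h1β] at ih
    have := one_sub_mul_rpow_neg_le_rpow_sub_rpow hβ0 hβ1.le n.cast_nonneg
    push_cast
    linarith

/-- The contraction `1 - γ ≤ (x - 1) / (x + 1)` outweighs the decay of both `A / x ^ 2` and
`K x ^ (-β)` from `x` to `x + 1`; `K ≥ 2 D` absorbs the forcing term. -/
lemma one_sub_mul_div_sq_add_le {β γ x A D K : ℝ} (hx : 1 ≤ x) (hβ : β ≤ 1) (hA : 0 ≤ A)
    (hD : 0 ≤ D) (hK : 2 * D ≤ K) (hγ : 2 / (x + 1) ≤ γ) :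
    (1 - γ) * (A / x ^ 2 + K * x ^ (-β)) + γ * (D * x ^ (-β))
      ≤ A / (x + 1) ^ 2 + K * (x + 1) ^ (-β) := by
  have hx0 : 0 < x := by linarith
  have hγ0 : 0 ≤ γ := le_trans (by positivity) hγ
  have hv : 0 ≤ x ^ (-β) := by positivity
  have hKv : 0 ≤ K * x ^ (-β) := mul_nonneg (by linarith) hv
  have hγx : 2 ≤ γ * (x + 1) := (div_le_iff₀ (by linarith)).1 hγ
  have hsq : (1 - γ) * (A / x ^ 2) ≤ A / (x + 1) ^ 2 := by
    rw [← mul_div_assoc, div_le_div_iff₀ (by positivity) (by positivity)]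
    nlinarith [mul_le_mul_of_nonneg_left hγx (by positivity : 0 ≤ A * (x + 1))]
  have hmono : x * x ^ (-β) ≤ (x + 1) * (x + 1) ^ (-β) := by
    rw [mul_comm, mul_comm (x + 1), rpow_neg_mul_self hx0, rpow_neg_mul_self (by linarith)]
    exact rpow_le_rpow hx0.le (by linarith) (by linarith)
  have hrpow : (1 - γ) * (K * x ^ (-β)) + γ * (D * x ^ (-β)) ≤ K * (x + 1) ^ (-β) :=
    calc (1 - γ) * (K * x ^ (-β)) + γ * (D * x ^ (-β))
        ≤ (1 - γ / 2) * (K * x ^ (-β)) := by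
          nlinarith [mul_le_mul_of_nonneg_left hK (mul_nonneg hγ0 hv)]
      _ ≤ (1 - 1 / (x + 1)) * (K * x ^ (-β)) := by
          have : 1 / (x + 1) ≤ γ / 2 := by
            rw [div_le_div_iff₀ (by linarith) two_pos]; linarith
          exact mul_le_mul_of_nonneg_right (by linarith) hKv
      _ = K * (x * x ^ (-β)) / (x + 1) := by field_simp; ring
      _ ≤ K * ((x + 1) * (x + 1) ^ (-β)) / (x + 1) := by gcongr; linarith
      _ = K * (x + 1) ^ (-β) := by field_simp
  linarith

lemma le_max_of_le_one_sub_mul_add_mul {a γ : ℕ → ℝ} {D : ℝ} (hγ : ∀ i, 0 ≤ γ i ∧ γ i ≤ 1)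
    (hrec : ∀ i, a (i + 1) ≤ (1 - γ i) * a i + γ i * D) (i : ℕ) : a i ≤ max (a 0) D := by
  induction i with
  | zero => exact le_max_left _ _
  | succ i ih =>
    obtain ⟨hγ0, hγ1⟩ := hγ i
    calc a (i + 1) ≤ (1 - γ i) * a i + γ i * D := hrec i
      _ ≤ (1 - γ i) * max (a 0) D + γ i * max (a 0) D := by
          gcongr
          exact le_max_right _ _
      _ = max (a 0) D := by ring

lemma le_div_sq_add_mul_rpow_of_le_one_sub_mul_add_mul {a γ : ℕ → ℝ} {β A D K : ℝ} {N : ℕ}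
    (hN : 1 ≤ N) (hβ : β ≤ 1) (hA : 0 ≤ A) (hD : 0 ≤ D) (hK : 2 * D ≤ K)
    (hγ : ∀ i, N ≤ i → 2 / (i + 1 : ℝ) ≤ γ i ∧ γ i ≤ 1)
    (hrec : ∀ i, N ≤ i → a (i + 1) ≤ (1 - γ i) * a i + γ i * (D * (i : ℝ) ^ (-β)))
    (hbase : a N ≤ A / (N : ℝ) ^ 2 + K * (N : ℝ) ^ (-β)) {i : ℕ} (hi : N ≤ i) :
    a i ≤ A / (i : ℝ) ^ 2 + K * (i : ℝ) ^ (-β) := by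
  induction i, hi using Nat.le_induction with
  | base => exact hbase
  | succ i hi ih =>
    obtain ⟨hγi, hγi1⟩ := hγ i hi
    have hi1 : (1 : ℝ) ≤ i := by exact_mod_cast hN.trans hi
    calc a (i + 1) ≤ (1 - γ i) * a i + γ i * (D * (i : ℝ) ^ (-β)) := hrec i hi
      _ ≤ (1 - γ i) * (A / (i : ℝ) ^ 2 + K * (i : ℝ) ^ (-β))
            + γ i * (D * (i : ℝ) ^ (-β)) := by gcongr
      _ ≤ A / ((i + 1 : ℕ) : ℝ) ^ 2 + K * ((i + 1 : ℕ) : ℝ) ^ (-β) := by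
          push_cast; exact one_sub_mul_div_sq_add_le hi1 hβ hA hD hK hγi

lemma le_div_sq_add_mul_rpow_of_recursion {a γ ρ : ℕ → ℝ} {β D : ℝ} {N : ℕ} (hN : 1 ≤ N)
    (hβ0 : 0 ≤ β) (hβ1 : β ≤ 1) (hD : 0 ≤ D) (ha0 : 0 ≤ a 0)
    (hγ : ∀ i, 0 ≤ γ i ∧ γ i ≤ 1) (hγN : ∀ i, N ≤ i → 2 / (i + 1 : ℝ) ≤ γ i)
    (hρ0 : ρ 0 ≤ D) (hρ : ∀ i, 1 ≤ i → ρ i ≤ D * (i : ℝ) ^ (-β))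
    (hrec : ∀ i, a (i + 1) ≤ (1 - γ i) * a i + γ i * ρ i) {i : ℕ} (hi : 1 ≤ i) :
    a i ≤ (N : ℝ) ^ 2 * a 0 / (i : ℝ) ^ 2 + 2 * D * (N : ℝ) ^ β * (i : ℝ) ^ (-β) := by
  have hρD : ∀ i, ρ i ≤ D := by
    rintro (_ | i)
    · exact hρ0
    · refine (hρ _ (by omega)).trans (mul_le_of_le_one_right hD ?_)
      exact rpow_le_one_of_one_le_of_nonpos (by simp) (by linarith)
  have hbounded (i : ℕ) : a i ≤ a 0 + D := by
    refine (le_max_of_le_one_sub_mul_add_mul hγ (fun i ↦ ?_) i).trans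
      (max_le_add_of_nonneg ha0 hD)
    exact (hrec i).trans (by gcongr; exacts [(hγ i).1, hρD i])
  have hinit {i : ℕ} (hi : 1 ≤ i) (hiN : i ≤ N) :
      a i ≤ (N : ℝ) ^ 2 * a 0 / (i : ℝ) ^ 2 + 2 * D * (N : ℝ) ^ β * (i : ℝ) ^ (-β) := by
    have hi0 : (0 : ℝ) < i := by exact_mod_cast hi
    have hiN' : (i : ℝ) ≤ N := by exact_mod_cast hiN
    have hsq : 1 ≤ (N : ℝ) ^ 2 / (i : ℝ) ^ 2 :=
      (one_le_div (by positivity)).2 (pow_le_pow_left₀ hi0.le hiN' 2)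
    have hpow : 1 ≤ (N : ℝ) ^ β * (i : ℝ) ^ (-β) := by
      rw [rpow_neg hi0.le, ← div_eq_mul_inv, one_le_div (by positivity)]
      exact rpow_le_rpow hi0.le hiN' hβ0
    calc a i ≤ a 0 + D := hbounded i
      _ ≤ (N : ℝ) ^ 2 / (i : ℝ) ^ 2 * a 0 + 2 * D * ((N : ℝ) ^ β * (i : ℝ) ^ (-β)) := by
          gcongr
          · exact le_mul_of_one_le_left ha0 hsq
          · nlinarith
      _ = _ := by ring
  rcases le_total i N with hiN | hNi
  · exact hinit hi hiN
  refine le_div_sq_add_mul_rpow_of_le_one_sub_mul_add_mul hN hβ1 (by positivity) hD ?_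
    (fun i hi ↦ ⟨hγN i hi, (hγ i).2⟩) (fun i hi ↦ ?_) (hinit hN le_rfl) hNi
  · have : (1 : ℝ) ≤ (N : ℝ) ^ β := one_le_rpow (by exact_mod_cast hN) hβ0
    nlinarith
  · exact (hrec i).trans (by gcongr; exacts [(hγ i).1, hρ i (hN.trans hi)])

lemma exists_two_div_le_mul_rpow_neg {β κ : ℝ} (hβ : β < 1) (hκ : 0 < κ) :
    ∃ N : ℕ, 1 ≤ N ∧ ∀ i : ℕ, N ≤ i → 2 / (i : ℝ) ≤ κ * (i : ℝ) ^ (-β) := by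
  have hlim : Tendsto (fun i : ℕ ↦ (i : ℝ) ^ (1 - β)) atTop atTop :=
    (tendsto_rpow_atTop (by linarith)).comp tendsto_natCast_atTop_atTop
  obtain ⟨N, hN⟩ := eventually_atTop.1 (hlim.eventually_ge_atTop (2 / κ))
  refine ⟨N + 1, by omega, fun i hi ↦ ?_⟩
  have hi0 : (0 : ℝ) < i := by exact_mod_cast (show 0 < i by omega)
  rw [div_le_iff₀ hi0, mul_assoc, rpow_neg_mul_self hi0, ← div_le_iff₀' hκ]
  exact hN i (by omega)

lemma sum_Icc_div_le_of_le_div_sq_add_mul_rpow {a : ℕ → ℝ} {β A K : ℝ} (hβ0 : 0 ≤ β)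
    (hβ1 : β < 1) (hA : 0 ≤ A) (hK : 0 ≤ K) {n : ℕ} (hn : 1 ≤ n)
    (ha : ∀ i ∈ Icc 1 n, a i ≤ A / (i : ℝ) ^ 2 + K * (i : ℝ) ^ (-β)) :
    (∑ i ∈ Icc 1 n, a i) / n ≤ 2 * A / n + K / (1 - β) * (n : ℝ) ^ (-β) := by
  have hn0 : (0 : ℝ) < n := by exact_mod_cast hn
  have hinv_sq : ∑ i ∈ Icc 1 n, ((i : ℝ) ^ 2)⁻¹ ≤ 2 := by
    have h := sum_Ioo_inv_sq_le (α := ℝ) 0 (n + 1)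
    rwa [show Ioo 0 (n + 1) = Icc 1 n by ext; simp; omega, CharP.cast_eq_zero, zero_add,
      div_one] at h
  have hsum : ∑ i ∈ Icc 1 n, a i ≤ A * 2 + K * ((n : ℝ) ^ (1 - β) / (1 - β)) :=
    calc ∑ i ∈ Icc 1 n, a i ≤ ∑ i ∈ Icc 1 n, (A / (i : ℝ) ^ 2 + K * (i : ℝ) ^ (-β)) :=
          sum_le_sum ha
      _ = A * ∑ i ∈ Icc 1 n, ((i : ℝ) ^ 2)⁻¹ + K * ∑ i ∈ Icc 1 n, (i : ℝ) ^ (-β) := by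
          simp only [sum_add_distrib, mul_sum, div_eq_mul_inv]
      _ ≤ A * 2 + K * ((n : ℝ) ^ (1 - β) / (1 - β)) := by
          gcongr
          exact sum_Icc_rpow_neg_le hβ0 hβ1 n
  calc (∑ i ∈ Icc 1 n, a i) / n ≤ (A * 2 + K * ((n : ℝ) ^ (1 - β) / (1 - β))) / n := by
        gcongr
    _ = 2 * A / n + K / (1 - β) * (n : ℝ) ^ (-β) := by
        have : 1 - β ≠ 0 := by linarith
        rw [← rpow_neg_mul_self hn0]
        field_simp

lemma le_div_sq_add_mul_rpow_of_sgd_recursion {β η c b M : ℝ} {a r : ℕ → ℝ} {N : ℕ}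
    (hβ0 : 0 ≤ β) (hβ1 : β ≤ 1) (hη : 0 ≤ η) (hc : 0 < c) (hb : 0 ≤ b) (hM : 0 ≤ M)
    (hN : 1 ≤ N) (hN_thr : ∀ i : ℕ, N ≤ i → 2 / (i : ℝ) ≤ c * η * (i : ℝ) ^ (-β))
    (ha0 : 0 ≤ a 0) (hsmall : ∀ i : ℕ, 1 ≤ i → c * (η * (i : ℝ) ^ (-β)) < 1)
    (hr : ∀ i : ℕ, 1 ≤ i → r i ≤ M * (i : ℝ) ^ (-β)) (hr0 : r 0 ≤ M)
    (hrec : ∀ i : ℕ, 1 ≤ i →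
      a i ≤ (1 - c * (η * (i : ℝ) ^ (-β))) * a (i - 1)
        + b * (η * (i : ℝ) ^ (-β)) * r (i - 1))
    {i : ℕ} (hi : 1 ≤ i) :
    a i ≤ (N : ℝ) ^ 2 * a 0 / (i : ℝ) ^ 2
      + 2 * (b * M / c) * (N : ℝ) ^ β * (i : ℝ) ^ (-β) := by
  refine le_div_sq_add_mul_rpow_of_recursion
    (γ := fun i ↦ c * (η * ((i + 1 : ℕ) : ℝ) ^ (-β))) (ρ := fun i ↦ b / c * r i)
    hN hβ0 hβ1 (by positivity) ha0 (fun i ↦ ⟨by positivity, (hsmall (i + 1) (by omega)).le⟩)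
    (fun i hi ↦ ?_) ?_ (fun i hi ↦ ?_) (fun i ↦ ?_) hi
  · have := hN_thr (i + 1) (by omega)
    push_cast at this ⊢
    linarith
  · rw [div_mul_eq_mul_div]
    gcongr
  · calc b / c * r i ≤ b / c * (M * (i : ℝ) ^ (-β)) := by gcongr; exact hr i hi
      _ = b * M / c * (i : ℝ) ^ (-β) := by ring
  · have hstep := hrec (i + 1) (by omega)
    rw [Nat.add_sub_cancel] at hstep
    refine hstep.trans_eq ?_
    field_simp

theorem stmt17 (β η c b M : ℝ) (hβ : β ∈ Set.Ioo (1/2 : ℝ) 1) (hη : 0 < η)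
    (hc : 0 < c) (hb : 0 < b) (hM : 0 < M) :
    ∃ C : ℝ, ∀ a r : ℕ → ℝ, 0 ≤ a 0 →
      (∀ i : ℕ, 1 ≤ i → c * (η * (i : ℝ) ^ (-β)) < 1) →
      (∀ i : ℕ, 1 ≤ i → r i ≤ M * (i : ℝ) ^ (-β)) → r 0 ≤ M →
      (∀ i : ℕ, 1 ≤ i →
        a i ≤ (1 - c * (η * (i : ℝ) ^ (-β))) * a (i - 1)
          + b * (η * (i : ℝ) ^ (-β)) * r (i - 1)) →
      ∀ n : ℕ, 1 ≤ n →
        (∑ i ∈ Finset.Icc 1 n, a i) / n ≤ C * max (a 0 / n) ((n : ℝ) ^ (-β)) := by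
  have hβ0 : 0 ≤ β := by linarith [hβ.1]
  obtain ⟨N, hN, hN_thr⟩ := exists_two_div_le_mul_rpow_neg hβ.2 (mul_pos hc hη)
  set K := 2 * (b * M / c) * (N : ℝ) ^ β
  refine ⟨2 * N ^ 2 + K / (1 - β), fun a r ha0 hsmall hr hr0 hrec n hn ↦ ?_⟩
  have hK : 0 ≤ K / (1 - β) := div_nonneg (by positivity) (by linarith [hβ.2])
  have hpointwise (i : ℕ) (hi : i ∈ Icc 1 n) :
      a i ≤ (N : ℝ) ^ 2 * a 0 / (i : ℝ) ^ 2 + K * (i : ℝ) ^ (-β) :=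
    le_div_sq_add_mul_rpow_of_sgd_recursion hβ0 hβ.2.le hη.le hc hb.le hM.le hN hN_thr ha0
      hsmall hr hr0 hrec (mem_Icc.1 hi).1
  calc (∑ i ∈ Icc 1 n, a i) / n
      ≤ 2 * ((N : ℝ) ^ 2 * a 0) / n + K / (1 - β) * (n : ℝ) ^ (-β) :=
        sum_Icc_div_le_of_le_div_sq_add_mul_rpow hβ0 hβ.2 (by positivity) (by positivity) hn
          hpointwise
    _ = 2 * N ^ 2 * (a 0 / n) + K / (1 - β) * (n : ℝ) ^ (-β) := by ring
    _ ≤ 2 * N ^ 2 * max (a 0 / n) ((n : ℝ) ^ (-β))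
          + K / (1 - β) * max (a 0 / n) ((n : ℝ) ^ (-β)) := by
        gcongr
        exacts [le_max_left _ _, le_max_right _ _]
    _ = (2 * N ^ 2 + K / (1 - β)) * max (a 0 / n) ((n : ℝ) ^ (-β)) := by ring
end
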